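/- arXiv:2510.04826 — 6 statements merged into one kernel-verified Lean document; each statement's English description precedes it below -/
import Mathlib

section
/- Let Φ, φ, φ̃, λ be periodic grid functions such that Φ_{i,j} ≥ 0 for all i, j, φ = φ̃ + λ, λ_{i,j} ≥ 0 for all i, j, and λ_{i,j} φ_{i,j} = 0 for all i, j. Set e = Φ − φ and ẽ = Φ − φ̃. Then ‖e‖_{L²}² + ‖e − ẽ‖_{L²}² ≤ ‖ẽ‖_{L²}². -/
open scoped BigOperators

namespace SPIMEX

abbrev Grid (N : ℕ) := ZMod N × ZMod N → ℝ

variable {N : ℕ}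

noncomputable def Dx (h : ℝ) (u : Grid N) : Grid N :=
  fun q => (u (q.1 + 1, q.2) - u q) / h

noncomputable def Dy (h : ℝ) (u : Grid N) : Grid N :=
  fun q => (u (q.1, q.2 + 1) - u q) / h

noncomputable def gdiv (h : ℝ) (f g : Grid N) : Grid N :=
  fun q => (f q - f (q.1 - 1, q.2)) / h + (g q - g (q.1, q.2 - 1)) / h

noncomputable def glap (h : ℝ) (u : Grid N) : Grid N :=
  gdiv h (Dx h u) (Dy h u)

noncomputable def ip [NeZero N] (h : ℝ) (u v : Grid N) : ℝ :=
  h ^ 2 * ∑ q : ZMod N × ZMod N, u q * v q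

noncomputable def nL2sq [NeZero N] (h : ℝ) (u : Grid N) : ℝ := ip h u u

noncomputable def gradIp [NeZero N] (h : ℝ) (u v : Grid N) : ℝ :=
  ip h (Dx h u) (Dx h v) + ip h (Dy h u) (Dy h v)

noncomputable def nH1sq [NeZero N] (h : ℝ) (u : Grid N) : ℝ :=
  nL2sq h u + gradIp h u u

noncomputable def nL2 [NeZero N] (h : ℝ) (u : Grid N) : ℝ := Real.sqrt (nL2sq h u)

noncomputable def nH1 [NeZero N] (h : ℝ) (u : Grid N) : ℝ := Real.sqrt (nH1sq h u)

/-- L² projection error estimate from the KKT correction step: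
‖e‖² + ‖e − ẽ‖² ≤ ‖ẽ‖² where e = Φ − φ and ẽ = Φ − φt. -/
theorem L2_projection_error (N : ℕ) [NeZero N] (hN : 2 ≤ N) (h : ℝ) (hh : 0 < h)
    (Φ φ φt lam : Grid N)
    (hΦ : ∀ q, 0 ≤ Φ q)
    (hproj : ∀ q, φ q = φt q + lam q)
    (hlam : ∀ q, 0 ≤ lam q)
    (hcomp : ∀ q, lam q * φ q = 0) :
    nL2sq h (fun q => Φ q - φ q)
      + nL2sq h (fun q => (Φ q - φ q) - (Φ q - φt q))
      ≤ nL2sq h (fun q => Φ q - φt q) := by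
  unfold nL2sq ip
  rw [← mul_add, ← Finset.sum_add_distrib]
  have hsq : (0:ℝ) ≤ h ^ 2 := sq_nonneg h
  apply mul_le_mul_of_nonneg_left _ hsq
  apply Finset.sum_le_sum
  intro q _
  have h1 := hproj q
  have h2 := hlam q
  have h3 := hcomp q
  have h4 := hΦ q
  rw [h1] at h3
  dsimp only
  rw [h1]
  nlinarith [mul_nonneg h2 h4, h3]

end SPIMEX
end

section
/- Let p̃ be a periodic grid function and suppose periodic grid functions p and ζ satisfy p_{i,j} ≥ 0 for all i, j, ζ_{i,j} ≥ 0 for all i, j, ζ_{i,j} p_{i,j} = 0 for all i, j, and (I − Δ_h)p = (I − Δ_h)p̃ + ζ. Then p is the unique minimizer of ½‖q − p̃‖_{H¹}² over all periodic grid functions q with q_{i,j} ≥ 0 for all i, j. -/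
open scoped BigOperators

namespace SPIMEX

variable {N : ℕ}

lemma shift_sum_x [NeZero N] (F : ZMod N × ZMod N → ℝ) :
    ∑ q : ZMod N × ZMod N, F (q.1 + 1, q.2) = ∑ q : ZMod N × ZMod N, F q :=
  Fintype.sum_equiv ((Equiv.addRight (1 : ZMod N)).prodCongr (Equiv.refl _))
    (fun q => F (q.1 + 1, q.2)) F (fun q => rfl)

lemma shift_sum_y [NeZero N] (F : ZMod N × ZMod N → ℝ) :
    ∑ q : ZMod N × ZMod N, F (q.1, q.2 + 1) = ∑ q : ZMod N × ZMod N, F q :=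
  Fintype.sum_equiv ((Equiv.refl _).prodCongr (Equiv.addRight (1 : ZMod N)))
    (fun q => F (q.1, q.2 + 1)) F (fun q => rfl)

lemma part_x [NeZero N] (h : ℝ) (u A : Grid N) :
    ∑ q : ZMod N × ZMod N, u q * ((A q - A (q.1 - 1, q.2)) / h)
      = -∑ q : ZMod N × ZMod N, ((u (q.1 + 1, q.2) - u q) / h) * A q := by
  have key : ∑ q : ZMod N × ZMod N, u q * A (q.1 - 1, q.2)
      = ∑ q : ZMod N × ZMod N, u (q.1 + 1, q.2) * A q := by
    have := shift_sum_x (N := N) (fun q => u q * A (q.1 - 1, q.2))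
    simpa using this.symm
  have lhs : ∑ q : ZMod N × ZMod N, u q * ((A q - A (q.1 - 1, q.2)) / h)
      = (∑ q : ZMod N × ZMod N, u q * A q
          - ∑ q : ZMod N × ZMod N, u q * A (q.1 - 1, q.2)) / h := by
    rw [← Finset.sum_sub_distrib, Finset.sum_div]
    exact Finset.sum_congr rfl (fun q _ => by ring)
  have rhs : -∑ q : ZMod N × ZMod N, ((u (q.1 + 1, q.2) - u q) / h) * A q
      = (∑ q : ZMod N × ZMod N, u q * A q
          - ∑ q : ZMod N × ZMod N, u (q.1 + 1, q.2) * A q) / h := by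
    rw [← Finset.sum_sub_distrib, Finset.sum_div, ← Finset.sum_neg_distrib]
    exact Finset.sum_congr rfl (fun q _ => by ring)
  rw [lhs, rhs, key]

lemma part_y [NeZero N] (h : ℝ) (u A : Grid N) :
    ∑ q : ZMod N × ZMod N, u q * ((A q - A (q.1, q.2 - 1)) / h)
      = -∑ q : ZMod N × ZMod N, ((u (q.1, q.2 + 1) - u q) / h) * A q := by
  have key : ∑ q : ZMod N × ZMod N, u q * A (q.1, q.2 - 1)
      = ∑ q : ZMod N × ZMod N, u (q.1, q.2 + 1) * A q := by
    have := shift_sum_y (N := N) (fun q => u q * A (q.1, q.2 - 1))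
    simpa using this.symm
  have lhs : ∑ q : ZMod N × ZMod N, u q * ((A q - A (q.1, q.2 - 1)) / h)
      = (∑ q : ZMod N × ZMod N, u q * A q
          - ∑ q : ZMod N × ZMod N, u q * A (q.1, q.2 - 1)) / h := by
    rw [← Finset.sum_sub_distrib, Finset.sum_div]
    exact Finset.sum_congr rfl (fun q _ => by ring)
  have rhs : -∑ q : ZMod N × ZMod N, ((u (q.1, q.2 + 1) - u q) / h) * A q
      = (∑ q : ZMod N × ZMod N, u q * A q
          - ∑ q : ZMod N × ZMod N, u (q.1, q.2 + 1) * A q) / h := by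
    rw [← Finset.sum_sub_distrib, Finset.sum_div, ← Finset.sum_neg_distrib]
    exact Finset.sum_congr rfl (fun q _ => by ring)
  rw [lhs, rhs, key]

lemma ip_glap [NeZero N] (h : ℝ) (u v : Grid N) :
    ip h u (glap h v) = - gradIp h u v := by
  simp only [ip, gradIp, glap, gdiv, Dx, Dy]
  have split : ∑ q : ZMod N × ZMod N,
      u q * ((((v (q.1 + 1, q.2) - v q) / h)
          - ((v (q.1 - 1 + 1, q.2) - v (q.1 - 1, q.2)) / h)) / h
        + (((v (q.1, q.2 + 1) - v q) / h)
          - ((v (q.1, q.2 - 1 + 1) - v (q.1, q.2 - 1)) / h)) / h)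
      = (∑ q : ZMod N × ZMod N,
          u q * (((Dx h v) q - (Dx h v) (q.1 - 1, q.2)) / h))
        + ∑ q : ZMod N × ZMod N,
          u q * (((Dy h v) q - (Dy h v) (q.1, q.2 - 1)) / h) := by
    rw [← Finset.sum_add_distrib]
    refine Finset.sum_congr rfl (fun q _ => ?_)
    simp only [Dx, Dy]
    ring
  rw [split, part_x, part_y]
  simp only [Dx, Dy]
  ring

lemma ip_sub_right [NeZero N] (h : ℝ) (u v w : Grid N) :
    ip h u (fun q => v q - w q) = ip h u v - ip h u w := by
  simp only [ip, mul_sub, Finset.sum_sub_distrib]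

lemma Hform [NeZero N] (h : ℝ) (u v : Grid N) :
    ip h u v + gradIp h u v = ip h u (fun q => v q - glap h v q) := by
  rw [ip_sub_right, ip_glap]
  ring

lemma glap_sub [NeZero N] (h : ℝ) (a b : Grid N) (q : ZMod N × ZMod N) :
    glap h (fun r => a r - b r) q = glap h a q - glap h b q := by
  simp only [glap, gdiv, Dx, Dy]
  ring

lemma sum_sq_expand [NeZero N] (a b : Grid N) :
    ∑ q : ZMod N × ZMod N, (a q + b q) * (a q + b q)
      = ∑ q : ZMod N × ZMod N, a q * a q
        + 2 * ∑ q : ZMod N × ZMod N, a q * b q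
        + ∑ q : ZMod N × ZMod N, b q * b q := by
  rw [Finset.mul_sum, ← Finset.sum_add_distrib, ← Finset.sum_add_distrib]
  exact Finset.sum_congr rfl (fun q _ => by ring)

lemma ip_expand [NeZero N] (h : ℝ) (a b : Grid N) :
    ip h (fun q => a q + b q) (fun q => a q + b q)
      = ip h a a + 2 * ip h a b + ip h b b := by
  simp only [ip]
  rw [sum_sq_expand]
  ring

lemma Dx_add [NeZero N] (h : ℝ) (a b : Grid N) :
    Dx h (fun q => a q + b q) = fun q => Dx h a q + Dx h b q := by
  funext q; simp only [Dx]; ring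

lemma Dy_add [NeZero N] (h : ℝ) (a b : Grid N) :
    Dy h (fun q => a q + b q) = fun q => Dy h a q + Dy h b q := by
  funext q; simp only [Dy]; ring

lemma nH1sq_expand [NeZero N] (h : ℝ) (a b : Grid N) :
    nH1sq h (fun q => a q + b q)
      = nH1sq h a + 2 * (ip h a b + gradIp h a b) + nH1sq h b := by
  simp only [nH1sq, nL2sq, gradIp, Dx_add, Dy_add]
  simp only [ip]
  rw [sum_sq_expand, sum_sq_expand (Dx h a) (Dx h b), sum_sq_expand (Dy h a) (Dy h b)]
  ring

lemma ip_self_nonneg [NeZero N] (h : ℝ) (u : Grid N) : 0 ≤ ip h u u := by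
  apply mul_nonneg (by positivity)
  exact Finset.sum_nonneg (fun q _ => mul_self_nonneg _)

lemma nH1sq_nonneg [NeZero N] (h : ℝ) (u : Grid N) : 0 ≤ nH1sq h u := by
  have := ip_self_nonneg h u
  have h1 := ip_self_nonneg h (Dx h u)
  have h2 := ip_self_nonneg h (Dy h u)
  simp only [nH1sq, nL2sq, gradIp]; linarith

lemma nH1sq_eq_zero [NeZero N] {h : ℝ} (hh : 0 < h) {u : Grid N}
    (h0 : nH1sq h u = 0) : u = 0 := by
  have hL : ip h u u = 0 := by
    have := ip_self_nonneg h u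
    have h1 := ip_self_nonneg h (Dx h u)
    have h2 := ip_self_nonneg h (Dy h u)
    simp only [nH1sq, nL2sq, gradIp] at h0
    linarith
  have hsum : ∑ q : ZMod N × ZMod N, u q * u q = 0 := by
    have hh2 : (h : ℝ) ^ 2 ≠ 0 := by positivity
    simpa [ip, hh2] using hL
  funext q
  have := (Finset.sum_eq_zero_iff_of_nonneg
    (fun q _ => mul_self_nonneg (u q))).mp hsum q (Finset.mem_univ q)
  have : u q * u q = 0 := this
  simpa [mul_self_eq_zero] using this

/-- KKT conditions are sufficient for the H¹ positivity-preserving projection: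
p is the unique minimizer of ½‖q − p̃‖_{H¹}² over nonnegative grid functions. -/
theorem H1_projection_KKT_sufficient (N : ℕ) [NeZero N] (hN : 2 ≤ N) (h : ℝ) (hh : 0 < h)
    (pt p ζ : Grid N)
    (hp : ∀ q, 0 ≤ p q)
    (hζ : ∀ q, 0 ≤ ζ q)
    (hcomp : ∀ q, ζ q * p q = 0)
    (hkkt : ∀ q, p q - glap h p q = (pt q - glap h pt q) + ζ q) :
    (∀ w : Grid N, (∀ q, 0 ≤ w q) →
        (1 / 2) * nH1sq h (fun q => p q - pt q)
          ≤ (1 / 2) * nH1sq h (fun q => w q - pt q)) ∧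
    (∀ w : Grid N, (∀ q, 0 ≤ w q) →
        (1 / 2) * nH1sq h (fun q => w q - pt q)
          = (1 / 2) * nH1sq h (fun q => p q - pt q) →
        w = p) := by
  set e : Grid N := fun q => p q - pt q with he_def
  have he : ∀ q, e q - glap h e q = ζ q := by
    intro q
    have h1 := hkkt q
    have h2 : glap h e q = glap h p q - glap h pt q := glap_sub h p pt q
    simp only [he_def]
    rw [h2]
    linarith
  have key : ∀ u : Grid N, ip h u e + gradIp h u e = ip h u ζ := by
    intro u
    rw [Hform]
    congr 1
    funext q
    exact he q
  have ipnn : ∀ w : Grid N, (∀ q, 0 ≤ w q) →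
      0 ≤ ip h (fun q => w q - p q) ζ := by
    intro w hw
    apply mul_nonneg (by positivity)
    refine Finset.sum_nonneg (fun q _ => ?_)
    have hc : p q * ζ q = 0 := by rw [mul_comm]; exact hcomp q
    have : (w q - p q) * ζ q = w q * ζ q := by rw [sub_mul, hc]; ring
    rw [this]
    exact mul_nonneg (hw q) (hζ q)
  have expand : ∀ w : Grid N,
      nH1sq h (fun q => w q - pt q)
        = nH1sq h (fun q => w q - p q)
          + 2 * ip h (fun q => w q - p q) ζ + nH1sq h e := by
    intro w
    have hfe : (fun q => w q - pt q)
        = (fun q => (fun r => w r - p r) q + e q) := by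
      funext q; simp only [he_def]; ring
    rw [hfe, nH1sq_expand, key]
  constructor
  · intro w hw
    have h1 := nH1sq_nonneg h (fun q => w q - p q)
    have h2 := ipnn w hw
    have h3 := expand w
    simp only [he_def] at h3 ⊢
    linarith
  · intro w hw heq
    have h1 := nH1sq_nonneg h (fun q => w q - p q)
    have h2 := ipnn w hw
    have h3 := expand w
    simp only [he_def] at h3 heq
    have h0 : nH1sq h (fun q => w q - p q) = 0 := by linarith
    have hz := nH1sq_eq_zero hh h0
    funext q
    have := congrFun hz q
    simp only [Pi.zero_apply] at this
    linarith

end SPIMEX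
end

section
/- Let p̃ be a periodic grid function. A pair (p, ζ) of periodic grid functions satisfies the H¹-projection KKT system — p ≥ 0 pointwise, ζ ≥ 0 pointwise, ζ_{i,j} p_{i,j} = 0 for all i, j, and (I − Δ_h)p = (I − Δ_h)p̃ + ζ — if and only if the grid function U = p − ζ satisfies the semi-smooth equation −Δ_h(U⁺) + U = (I − Δ_h)p̃, where (U⁺)_{i,j} = max(U_{i,j}, 0); and in that case p = U⁺ and ζ = U⁻ with (U⁻)_{i,j} = max(−U_{i,j}, 0). -/
open scoped BigOperators

namespace SPIMEX

variable {N : ℕ}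

/-- The H¹-projection KKT system is equivalent to the semi-smooth equation
−Δ_h(U⁺) + U = (I − Δ_h)p̃ for U = p − ζ, with p = U⁺ and ζ = U⁻. -/
theorem H1_KKT_semismooth_reformulation (N : ℕ) [NeZero N] (hN : 2 ≤ N)
    (h : ℝ) (hh : 0 < h) (pt p ζ : Grid N) :
    ((∀ q, 0 ≤ p q) ∧ (∀ q, 0 ≤ ζ q) ∧ (∀ q, ζ q * p q = 0) ∧
      (∀ q, p q - glap h p q = (pt q - glap h pt q) + ζ q))
    ↔
    ((∀ q, -glap h (fun r => max (p r - ζ r) 0) q + (p q - ζ q)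
          = pt q - glap h pt q) ∧
      (p = fun q => max (p q - ζ q) 0) ∧
      (ζ = fun q => max (-(p q - ζ q)) 0)) := by
  constructor
  · rintro ⟨hp, hz, hzp, heq⟩
    have hpf : (fun r => max (p r - ζ r) 0) = p := by
      funext r
      rcases mul_eq_zero.mp (hzp r) with h0 | h0
      · simp [h0, hp r]
      · simp [h0]
        exact hz r
    have hzf : (fun q => max (-(p q - ζ q)) 0) = ζ := by
      funext r
      rcases mul_eq_zero.mp (hzp r) with h0 | h0
      · simp [h0, hp r]
      · simp [h0, hz r]
    refine ⟨fun q => ?_, hpf.symm, hzf.symm⟩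
    rw [hpf]
    have := heq q
    linarith
  · rintro ⟨heq, hp, hz⟩
    have hp' : ∀ q, 0 ≤ p q := fun q => by rw [hp]; exact le_max_right _ _
    have hz' : ∀ q, 0 ≤ ζ q := fun q => by rw [hz]; exact le_max_right _ _
    refine ⟨hp', hz', fun q => ?_, fun q => ?_⟩
    · rcases le_total (p q - ζ q) 0 with h0 | h0
      · have : p q = 0 := by rw [hp]; simp [max_eq_right h0]
        simp [this]
      · have : ζ q = 0 := by
          conv_lhs => rw [hz]
          exact max_eq_right (by linarith)
        simp [this]
    · have := heq q
      rw [show (fun r => max (p r - ζ r) 0) = p from hp.symm] at this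
      linarith

end SPIMEX
end

section
/- Let ψ̃_1, …, ψ̃_8 be periodic grid functions, M ∈ ℝ, and suppose ξ ∈ ℝ satisfies h² Σ_{k=1}^{8} Σ_{i,j} max(ψ̃_{k,i,j} − ξ, 0) = M. Then the 8-tuple defined pointwise by ψ_k = max(ψ̃_k − ξ, 0), k = 1, …, 8, is the unique minimizer of ½ Σ_{k=1}^{8} ‖u_k − ψ̃_k‖_{L²}² over all 8-tuples (u_1, …, u_8) of periodic grid functions with u_k ≥ 0 pointwise and Σ_{k=1}^{8} ⟨u_k, 1⟩ = M; moreover, setting λ_k = max(−(ψ̃_k − ξ), 0) pointwise, the KKT conditions ψ_k = ψ̃_k + λ_k − ξ, λ_k ≥ 0 pointwise, and λ_{k,i,j} ψ_{k,i,j} = 0 for all i, j hold. -/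
open scoped BigOperators

namespace SPIMEX

variable {N : ℕ}

/-- Cut-off characterization of the mass-conserving positivity-preserving L² projection:
if ξ solves the scalar mass equation, then ψ_k = max(ψ̃_k − ξ, 0) is the unique
minimizer, and the KKT conditions hold with λ_k = max(−(ψ̃_k − ξ), 0). -/
theorem mass_conserving_L2_projection_characterization (N : ℕ) [NeZero N] (hN : 2 ≤ N)
    (h : ℝ) (hh : 0 < h) (ψt : Fin 8 → Grid N) (M ξ : ℝ)
    (hξ : h ^ 2 * ∑ k : Fin 8, ∑ q : ZMod N × ZMod N, max (ψt k q - ξ) 0 = M) :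
    (∀ k q, 0 ≤ max (ψt k q - ξ) 0) ∧
    (∑ k : Fin 8, ip h (fun q => max (ψt k q - ξ) 0) (fun _ => 1) = M) ∧
    (∀ u : Fin 8 → Grid N, (∀ k q, 0 ≤ u k q) →
        (∑ k : Fin 8, ip h (u k) (fun _ => 1)) = M →
        (1 / 2) * ∑ k : Fin 8, nL2sq h (fun q => max (ψt k q - ξ) 0 - ψt k q)
          ≤ (1 / 2) * ∑ k : Fin 8, nL2sq h (fun q => u k q - ψt k q)) ∧
    (∀ u : Fin 8 → Grid N, (∀ k q, 0 ≤ u k q) →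
        (∑ k : Fin 8, ip h (u k) (fun _ => 1)) = M →
        (1 / 2) * ∑ k : Fin 8, nL2sq h (fun q => u k q - ψt k q)
          = (1 / 2) * ∑ k : Fin 8, nL2sq h (fun q => max (ψt k q - ξ) 0 - ψt k q) →
        u = fun k => fun q => max (ψt k q - ξ) 0) ∧
    (∀ k q, max (ψt k q - ξ) 0 = ψt k q + max (-(ψt k q - ξ)) 0 - ξ) ∧
    (∀ k q, 0 ≤ max (-(ψt k q - ξ)) 0) ∧
    (∀ k q, max (-(ψt k q - ξ)) 0 * max (ψt k q - ξ) 0 = 0) := by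
  have hh2 : (0:ℝ) < h ^ 2 := by positivity
  have hpsilam : ∀ (k : Fin 8) (q : ZMod N × ZMod N),
      max (ψt k q - ξ) 0 = ψt k q + max (-(ψt k q - ξ)) 0 - ξ := by
    intro k q
    rcases le_total (ψt k q - ξ) 0 with hc | hc
    · rw [max_eq_right hc, max_eq_left (by linarith)]; linarith
    · rw [max_eq_left hc, max_eq_right (by linarith)]; ring
  have hcomp : ∀ (k : Fin 8) (q : ZMod N × ZMod N),
      max (-(ψt k q - ξ)) 0 * max (ψt k q - ξ) 0 = 0 := by
    intro k q
    rcases le_total (ψt k q - ξ) 0 with hc | hc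
    · rw [max_eq_right hc, mul_zero]
    · rw [max_eq_right (by linarith : -(ψt k q - ξ) ≤ 0), zero_mul]
  have hmassψ : ∑ k : Fin 8, ip h (fun q => max (ψt k q - ξ) 0) (fun _ => 1) = M := by
    simp only [ip, mul_one]
    rw [← Finset.mul_sum]; exact hξ
  have L2eq : ∀ (v : Fin 8 → Grid N), ∑ k : Fin 8, nL2sq h (v k)
      = h ^ 2 * ∑ k : Fin 8, ∑ q : ZMod N × ZMod N, v k q * v k q := by
    intro v; simp only [nL2sq, ip, ← Finset.mul_sum]
  have key : ∀ u : Fin 8 → Grid N, (∀ k q, 0 ≤ u k q) →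
      (∑ k : Fin 8, ip h (u k) (fun _ => 1)) = M →
      (∑ k : Fin 8, nL2sq h (fun q => max (ψt k q - ξ) 0 - ψt k q))
        + h ^ 2 * ∑ k : Fin 8, ∑ q : ZMod N × ZMod N,
            (u k q - max (ψt k q - ξ) 0) ^ 2
        ≤ ∑ k : Fin 8, nL2sq h (fun q => u k q - ψt k q) := by
    intro u hu hmass
    have hmass' : ∑ k : Fin 8, ∑ q : ZMod N × ZMod N, u k q
        = ∑ k : Fin 8, ∑ q : ZMod N × ZMod N, max (ψt k q - ξ) 0 := by
      have h1 : h ^ 2 * ∑ k : Fin 8, ∑ q : ZMod N × ZMod N, u k q = M := by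
        simp only [ip, mul_one] at hmass
        rw [← Finset.mul_sum] at hmass; exact hmass
      have h2 := hξ
      have := h1.trans h2.symm
      exact mul_left_cancel₀ (ne_of_gt hh2) this
    have pt : ∀ (k : Fin 8) (q : ZMod N × ZMod N),
        (u k q - ψt k q) * (u k q - ψt k q)
        = (max (ψt k q - ξ) 0 - ψt k q) * (max (ψt k q - ξ) 0 - ψt k q)
          + (u k q - max (ψt k q - ξ) 0) ^ 2
          + 2 * (max (-(ψt k q - ξ)) 0 * u k q)
          - 2 * (max (-(ψt k q - ξ)) 0 * max (ψt k q - ξ) 0)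
          - 2 * ξ * u k q + 2 * ξ * max (ψt k q - ξ) 0 := by
      intro k q
      rw [hpsilam k q]; ring
    have sumeq : ∑ k : Fin 8, ∑ q : ZMod N × ZMod N, (u k q - ψt k q) * (u k q - ψt k q)
        = (∑ k : Fin 8, ∑ q : ZMod N × ZMod N,
            (max (ψt k q - ξ) 0 - ψt k q) * (max (ψt k q - ξ) 0 - ψt k q))
          + (∑ k : Fin 8, ∑ q : ZMod N × ZMod N, (u k q - max (ψt k q - ξ) 0) ^ 2)
          + 2 * ∑ k : Fin 8, ∑ q : ZMod N × ZMod N, max (-(ψt k q - ξ)) 0 * u k q := by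
      have h1 : ∑ k : Fin 8, ∑ q : ZMod N × ZMod N, (u k q - ψt k q) * (u k q - ψt k q)
          = ∑ k : Fin 8, ∑ q : ZMod N × ZMod N,
            ((max (ψt k q - ξ) 0 - ψt k q) * (max (ψt k q - ξ) 0 - ψt k q)
              + (u k q - max (ψt k q - ξ) 0) ^ 2
              + 2 * (max (-(ψt k q - ξ)) 0 * u k q)
              - 2 * (max (-(ψt k q - ξ)) 0 * max (ψt k q - ξ) 0)
              - 2 * ξ * u k q + 2 * ξ * max (ψt k q - ξ) 0) :=
        Finset.sum_congr rfl fun k _ => Finset.sum_congr rfl fun q _ => pt k q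
      rw [h1]
      simp only [Finset.sum_add_distrib, Finset.sum_sub_distrib, ← Finset.mul_sum, hcomp,
        Finset.sum_const_zero, mul_zero]
      rw [hmass']
      ring
    have hL : 0 ≤ ∑ k : Fin 8, ∑ q : ZMod N × ZMod N, max (-(ψt k q - ξ)) 0 * u k q := by
      apply Finset.sum_nonneg; intro k _
      apply Finset.sum_nonneg; intro q _
      exact mul_nonneg (le_max_right _ _) (hu k q)
    rw [L2eq (fun k => fun q => max (ψt k q - ξ) 0 - ψt k q),
      L2eq (fun k => fun q => u k q - ψt k q)]
    nlinarith [mul_le_mul_of_nonneg_left hL (le_of_lt hh2)]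
  refine ⟨fun k q => le_max_right _ _, hmassψ, ?_, ?_, hpsilam, fun k q => le_max_right _ _, hcomp⟩
  · intro u hu hm
    have hk := key u hu hm
    have hsq : 0 ≤ ∑ k : Fin 8, ∑ q : ZMod N × ZMod N, (u k q - max (ψt k q - ξ) 0) ^ 2 := by
      apply Finset.sum_nonneg; intro k _
      apply Finset.sum_nonneg; intro q _
      positivity
    nlinarith
  · intro u hu hm heq
    have hk := key u hu hm
    have hsq0 : ∑ k : Fin 8, ∑ q : ZMod N × ZMod N, (u k q - max (ψt k q - ξ) 0) ^ 2 = 0 := by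
      have hsq : 0 ≤ ∑ k : Fin 8, ∑ q : ZMod N × ZMod N, (u k q - max (ψt k q - ξ) 0) ^ 2 := by
        apply Finset.sum_nonneg; intro k _
        apply Finset.sum_nonneg; intro q _
        positivity
      nlinarith
    funext k q
    have h1 : ∀ k ∈ (Finset.univ : Finset (Fin 8)),
        ∑ q : ZMod N × ZMod N, (u k q - max (ψt k q - ξ) 0) ^ 2 = 0 := by
      rw [← Finset.sum_eq_zero_iff_of_nonneg]
      · exact hsq0
      · intro k _
        apply Finset.sum_nonneg; intro q _; positivity
    have h2 : ∀ q ∈ (Finset.univ : Finset (ZMod N × ZMod N)),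
        (u k q - max (ψt k q - ξ) 0) ^ 2 = 0 := by
      rw [← Finset.sum_eq_zero_iff_of_nonneg]
      · exact h1 k (Finset.mem_univ k)
      · intro q _; positivity
    have h3 := h2 q (Finset.mem_univ q)
    have := pow_eq_zero_iff (n := 2) (by norm_num) |>.mp h3
    linarith [sub_eq_zero.mp this]


end SPIMEX
end

section
/- Let Ψ_1, …, Ψ_8 be periodic grid functions with Ψ_{i} ≥ 0 pointwise (the exact solution values), and suppose periodic grid functions ψ_i, ψ̃_i, λ_i (i = 1, …, 8) and a real number ξ satisfy ψ_i = ψ̃_i + λ_i − ξ (with ξ subtracted as a constant grid function), λ_i ≥ 0 pointwise, λ_{i} ψ_{i} = 0 pointwise, and the mass equality Σ_{i=1}^{8} ⟨Ψ_i − ψ_i, 1⟩ = 0 (which holds because both the exact solution and the corrected numerical solution conserve the same total mass). Set e_i = Ψ_i − ψ_i and ẽ_i = Ψ_i − ψ̃_i. Then Σ_{i=1}^{8} ‖e_i‖_{L²}² + Σ_{i=1}^{8} ‖e_i − ẽ_i‖_{L²}² ≤ Σ_{i=1}^{8} ‖ẽ_i‖_{L²}². -/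
open scoped BigOperators

namespace SPIMEX

variable {N : ℕ}

/-- Projection error lemma for the mass-conserving positivity-preserving correction step
of the epidemic SPIMEX scheme: Σ‖e_i‖² + Σ‖e_i − ẽ_i‖² ≤ Σ‖ẽ_i‖². -/
theorem epidemic_projection_error (N : ℕ) [NeZero N] (hN : 2 ≤ N) (h : ℝ) (hh : 0 < h)
    (Ψ ψ ψt lam : Fin 8 → Grid N) (ξ : ℝ)
    (hΨ : ∀ i q, 0 ≤ Ψ i q)
    (hkkt : ∀ i q, ψ i q = ψt i q + lam i q - ξ)
    (hlam : ∀ i q, 0 ≤ lam i q)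
    (hcomp : ∀ i q, lam i q * ψ i q = 0)
    (hmass : ∑ i : Fin 8, ip h (fun q => Ψ i q - ψ i q) (fun _ => 1) = 0) :
    (∑ i : Fin 8, nL2sq h (fun q => Ψ i q - ψ i q))
      + (∑ i : Fin 8, nL2sq h (fun q => (Ψ i q - ψ i q) - (Ψ i q - ψt i q)))
      ≤ ∑ i : Fin 8, nL2sq h (fun q => Ψ i q - ψt i q) := by
  have key : ∀ i : Fin 8,
      nL2sq h (fun q => Ψ i q - ψt i q)
        = nL2sq h (fun q => Ψ i q - ψ i q)
          + nL2sq h (fun q => (Ψ i q - ψ i q) - (Ψ i q - ψt i q))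
          + 2 * ip h (fun q => Ψ i q - ψ i q) (lam i)
          - 2 * ξ * ip h (fun q => Ψ i q - ψ i q) (fun _ => 1) := by
    intro i
    simp only [nL2sq, ip]
    have hpt : ∀ q : ZMod N × ZMod N, (Ψ i q - ψt i q) * (Ψ i q - ψt i q)
        = (Ψ i q - ψ i q) * (Ψ i q - ψ i q)
          + (Ψ i q - ψ i q - (Ψ i q - ψt i q)) * (Ψ i q - ψ i q - (Ψ i q - ψt i q))
          + 2 * ((Ψ i q - ψ i q) * lam i q) - 2 * ξ * ((Ψ i q - ψ i q) * 1) := by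
      intro q; rw [hkkt i q]; ring
    rw [Finset.sum_congr rfl fun q _ => hpt q, Finset.sum_sub_distrib,
      Finset.sum_add_distrib, Finset.sum_add_distrib, ← Finset.mul_sum, ← Finset.mul_sum]
    ring
  have hnn : ∀ i : Fin 8, 0 ≤ ip h (fun q => Ψ i q - ψ i q) (lam i) := by
    intro i
    unfold ip
    apply mul_nonneg (by positivity)
    apply Finset.sum_nonneg
    intro q _
    have hc := hcomp i q
    have : (Ψ i q - ψ i q) * lam i q = Ψ i q * lam i q := by
      nlinarith [hc]
    rw [this]
    exact mul_nonneg (hΨ i q) (hlam i q)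
  have hsum : ∑ i : Fin 8, nL2sq h (fun q => Ψ i q - ψt i q)
      = (∑ i : Fin 8, nL2sq h (fun q => Ψ i q - ψ i q))
        + (∑ i : Fin 8, nL2sq h (fun q => (Ψ i q - ψ i q) - (Ψ i q - ψt i q)))
        + 2 * ∑ i : Fin 8, ip h (fun q => Ψ i q - ψ i q) (lam i)
        - 2 * ξ * ∑ i : Fin 8, ip h (fun q => Ψ i q - ψ i q) (fun _ => 1) := by
    rw [Finset.mul_sum, Finset.mul_sum, ← Finset.sum_add_distrib, ← Finset.sum_add_distrib,
      ← Finset.sum_sub_distrib]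
    exact Finset.sum_congr rfl fun i _ => key i
  rw [hsum, hmass]
  have := Finset.sum_nonneg (fun i (_ : i ∈ Finset.univ) => hnn i)
  linarith

end SPIMEX
end

section
/- With the epidemic reaction terms G_1, …, G_8 as defined in the context (which satisfy Σ_{i=1}^{8} G_i(Ψ) = 0 pointwise for every state Ψ), suppose periodic grid functions Ψ^k = (ψ_1^k, …, ψ_8^k), Ψ^{k−1} = (ψ_1^{k−1}, …, ψ_8^{k−1}), p^k, p^{k−1}, p⁰ are given with p^k + p⁰ and p^{k−1} + p⁰ nowhere zero, and Ψ̃^{k+1} = (ψ̃_1^{k+1}, …, ψ̃_8^{k+1}) is defined by the prediction step: for the mobile compartments i = 1, …, 7, (ψ̃_i^{k+1} − ψ_i^k)/τ = (D/8)Δ_h(ψ̃_i^{k+1} + ψ_i^k) − (3D/4)∇_h·((ψ_i^k/(p^k + p⁰))∇_h(p^k + p⁰)) + (D/4)∇_h·((ψ_i^{k−1}/(p^{k−1} + p⁰))∇_h(p^{k−1} + p⁰)) + (3/2)G_i(Ψ^k) − (1/2)G_i(Ψ^{k−1}), and for the hospitalized compartment i = 8, (ψ̃_8^{k+1} − ψ_8^k)/τ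 = (3/2)G_8(Ψ^k) − (1/2)G_8(Ψ^{k−1}). Then the total discrete mass is conserved: Σ_{i=1}^{8} ⟨ψ̃_i^{k+1}, 1⟩ = Σ_{i=1}^{8} ⟨ψ_i^k, 1⟩. -/
open scoped BigOperators

namespace SPIMEX

variable {N : ℕ}

noncomputable def divC (h : ℝ) (c u : Grid N) : Grid N :=
  gdiv h (fun q => (c q + c (q.1 + 1, q.2)) / 2 * Dx h u q)
         (fun q => (c q + c (q.1, q.2 + 1)) / 2 * Dy h u q)

noncomputable def chemFlux (h : ℝ) (u p pb : Grid N) : Grid N :=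
  divC h (fun q => u q / (p q + pb q)) (fun q => p q + pb q)

/-- Pointwise epidemic reaction terms for the eight compartments
(S, E, P, A, I⁻, I⁺, R, H) = (v 0, …, v 7). -/
noncomputable def Greact (lam β ηe ηe' ρ pH δA δIm δIp δH δR : ℝ)
    (v : Fin 8 → ℝ) : Fin 8 → ℝ :=
  ![ -(lam * (β * (v 2 + v 3) + v 4 + v 5) * v 0) + δR * v 6,
     lam * (β * (v 2 + v 3) + v 4 + v 5) * v 0 - ηe * v 1,
     ηe * v 1 - ηe' * v 2,
     ηe' * (1 - ρ) * v 2 - δA * v 3,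
     ηe' * ρ * (1 - pH) * v 2 - δIm * v 4,
     ηe' * ρ * pH * v 2 - δIp * v 5,
     δA * v 3 + δIm * v 4 + δH * v 7 - δR * v 6,
     δIp * v 5 - δH * v 7 ]


lemma sum_shift_x [NeZero N] (f : Grid N) :
    ∑ q : ZMod N × ZMod N, f (q.1 - 1, q.2) = ∑ q : ZMod N × ZMod N, f q :=
  Fintype.sum_equiv ((Equiv.subRight (1 : ZMod N)).prodCongr (Equiv.refl _)) _ _ (fun _ => rfl)

lemma sum_shift_y [NeZero N] (f : Grid N) :
    ∑ q : ZMod N × ZMod N, f (q.1, q.2 - 1) = ∑ q : ZMod N × ZMod N, f q :=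
  Fintype.sum_equiv ((Equiv.refl _).prodCongr (Equiv.subRight (1 : ZMod N))) _ _ (fun _ => rfl)

lemma sum_gdiv [NeZero N] (h : ℝ) (f g : Grid N) : ∑ q : ZMod N × ZMod N, gdiv h f g q = 0 := by
  unfold gdiv
  rw [Finset.sum_add_distrib, ← Finset.sum_div, ← Finset.sum_div,
    Finset.sum_sub_distrib, Finset.sum_sub_distrib]
  rw [sum_shift_x (N := N) f, sum_shift_y (N := N) g]
  simp

lemma sum_glap [NeZero N] (h : ℝ) (u : Grid N) : ∑ q : ZMod N × ZMod N, glap h u q = 0 :=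
  sum_gdiv h _ _

lemma sum_chemFlux [NeZero N] (h : ℝ) (u p pb : Grid N) :
    ∑ q : ZMod N × ZMod N, chemFlux h u p pb q = 0 :=
  sum_gdiv h _ _

lemma sum_Greact (lam β ηe ηe' ρ pH δA δIm δIp δH δR : ℝ) (v : Fin 8 → ℝ) :
    ∑ i : Fin 8, Greact lam β ηe ηe' ρ pH δA δIm δIp δH δR v i = 0 := by
  simp only [Greact, Fin.sum_univ_succ, Fin.sum_univ_zero, Matrix.cons_val_zero,
    Matrix.cons_val_succ]
  ring

/-- The epidemic SPIMEX prediction step conserves the total discrete mass: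
Σ_i ⟨ψ̃_i^{k+1}, 1⟩ = Σ_i ⟨ψ_i^k, 1⟩. -/
theorem epidemic_prediction_mass_conservation (N : ℕ) [NeZero N] (hN : 2 ≤ N)
    (h τ D : ℝ) (hh : 0 < h) (hτ : 0 < τ) (hD : 0 < D)
    (lam β ηe ηe' ρ pH δA δIm δIp δH δR : ℝ)
    (hlam : 0 ≤ lam) (hβ : 0 ≤ β) (hηe : 0 ≤ ηe) (hηe' : 0 ≤ ηe') (hρ : 0 ≤ ρ)
    (hpH : 0 ≤ pH) (hδA : 0 ≤ δA) (hδIm : 0 ≤ δIm) (hδIp : 0 ≤ δIp)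
    (hδH : 0 ≤ δH) (hδR : 0 ≤ δR)
    (Ψk Ψm Ψt : Fin 8 → Grid N) (pk pm pb : Grid N)
    (hpk : ∀ q, pk q + pb q ≠ 0) (hpm : ∀ q, pm q + pb q ≠ 0)
    (hmobile : ∀ i : Fin 8, i ≠ 7 → ∀ q,
        (Ψt i q - Ψk i q) / τ
          = D / 8 * glap h (fun r => Ψt i r + Ψk i r) q
            - 3 * D / 4 * chemFlux h (Ψk i) pk pb q
            + D / 4 * chemFlux h (Ψm i) pm pb q
            + 3 / 2 * Greact lam β ηe ηe' ρ pH δA δIm δIp δH δR (fun j => Ψk j q) i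
            - 1 / 2 * Greact lam β ηe ηe' ρ pH δA δIm δIp δH δR (fun j => Ψm j q) i)
    (hH : ∀ q,
        (Ψt 7 q - Ψk 7 q) / τ
          = 3 / 2 * Greact lam β ηe ηe' ρ pH δA δIm δIp δH δR (fun j => Ψk j q) 7
            - 1 / 2 * Greact lam β ηe ηe' ρ pH δA δIm δIp δH δR (fun j => Ψm j q) 7) :
    ∑ i : Fin 8, ip h (Ψt i) (fun _ => 1) = ∑ i : Fin 8, ip h (Ψk i) (fun _ => 1) := by
  classical
  have hτ' : τ ≠ 0 := ne_of_gt hτ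
  set G := Greact lam β ηe ηe' ρ pH δA δIm δIp δH δR with hG
  have key : ∀ i : Fin 8, ∑ q : ZMod N × ZMod N, (Ψt i q - Ψk i q)
      = τ * ∑ q : ZMod N × ZMod N,
          (3 / 2 * G (fun j => Ψk j q) i - 1 / 2 * G (fun j => Ψm j q) i) := by
    intro i
    by_cases hi : i = 7
    · subst hi
      rw [Finset.mul_sum]
      refine Finset.sum_congr rfl ?_
      intro q _
      have := hH q
      field_simp at this
      linarith [this]
    · have heach : ∀ q, Ψt i q - Ψk i q
          = τ * (D / 8 * glap h (fun r => Ψt i r + Ψk i r) q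
            - 3 * D / 4 * chemFlux h (Ψk i) pk pb q
            + D / 4 * chemFlux h (Ψm i) pm pb q
            + 3 / 2 * G (fun j => Ψk j q) i
            - 1 / 2 * G (fun j => Ψm j q) i) := by
        intro q
        have := hmobile i hi q
        field_simp at this
        linarith [this]
      rw [Finset.sum_congr rfl (fun q _ => heach q)]
      rw [← Finset.mul_sum]
      congr 1
      have e1 := sum_glap (N := N) h (fun r => Ψt i r + Ψk i r)
      have e2 := sum_chemFlux (N := N) h (Ψk i) pk pb
      have e3 := sum_chemFlux (N := N) h (Ψm i) pm pb
      simp only [Finset.sum_sub_distrib, Finset.sum_add_distrib, ← Finset.mul_sum,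
        e1, e2, e3]
      ring
  have total : ∑ i : Fin 8, ∑ q : ZMod N × ZMod N, (Ψt i q - Ψk i q) = 0 := by
    rw [Finset.sum_congr rfl (fun i _ => key i)]
    rw [← Finset.mul_sum, Finset.sum_comm]
    have hz : ∀ q : ZMod N × ZMod N,
        ∑ i : Fin 8, (3 / 2 * G (fun j => Ψk j q) i - 1 / 2 * G (fun j => Ψm j q) i) = 0 := by
      intro q
      rw [Finset.sum_sub_distrib, ← Finset.mul_sum, ← Finset.mul_sum,
        hG]
      rw [sum_Greact, sum_Greact]
      ring
    rw [Finset.sum_congr rfl (fun q _ => hz q)]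
    simp
  have expand : ∑ i : Fin 8, ip h (Ψt i) (fun _ => 1)
      - ∑ i : Fin 8, ip h (Ψk i) (fun _ => 1)
      = h ^ 2 * ∑ i : Fin 8, ∑ q : ZMod N × ZMod N, (Ψt i q - Ψk i q) := by
    simp only [ip, mul_one, ← Finset.mul_sum, ← Finset.sum_sub_distrib, ← mul_sub]
  rw [total, mul_zero] at expand
  linarith [expand]

end SPIMEX
end
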